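/- Let B be a bicategory and W a class of arrows satisfying [WB1]–[WB5] whose arrows are all co-full (every 2-cell α : f∘w ⇒ g∘w with w ∈ W factors as α′∘w for some α′ : f ⇒ g). Then every 2-cell of the bicategory of fractions B(W⁻¹) between spans (u₁, f₁) and (u₂, f₂) can be represented by a diagram whose left-hand invertible 2-cell is any prescribed square γ : u₁∘t₁ ⇒ u₂∘t₂ with u₁∘t₁ ∈ W. -/

import Mathlib

open CategoryTheory Bicategory

universe w v u

/-- A class of 1-morphisms in a bicategory. -/
def WClass (B : Type u) [Bicategory.{w, v} B] :=
  ∀ ⦃a b : B⦄, (a ⟶ b) → Prop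

namespace WClass

variable {B : Type u} [Bicategory.{w, v} B]

/-- [WB1]: all identities are in `W`. -/
def WB1 (W : WClass B) : Prop := ∀ a : B, W (𝟙 a)

/-- [WB2]: for composable arrows of `W` there is a pre-composition landing in `W`. -/
def WB2 (W : WClass B) : Prop :=
  ∀ ⦃a b c : B⦄ (vm : a ⟶ b) (wm : b ⟶ c), W vm → W wm →
    ∃ (a' : B) (u : a' ⟶ a), W (u ≫ vm ≫ wm)

/-- [WB3]: squares with invertible fillers over cospans with one leg in `W`. -/
def WB3 (W : WClass B) : Prop :=
  ∀ ⦃a b c : B⦄ (wm : a ⟶ b) (f : c ⟶ b), W wm →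
    ∃ (d : B) (h : d ⟶ a) (vm : d ⟶ c), W vm ∧ Nonempty (h ≫ wm ≅ vm ≫ f)

/-- `β` is a lifting of the 2-cell `η : f ≫ wm ⟶ g ≫ wm` along `wm`, via `u`. -/
def IsLift ⦃a b c : B⦄ (f g : a ⟶ b) (wm : b ⟶ c) (η : f ≫ wm ⟶ g ≫ wm)
    ⦃a' : B⦄ (u : a' ⟶ a) (β : u ≫ f ⟶ u ≫ g) : Prop :=
  β ▷ wm = (α_ u f wm).hom ≫ u ◁ η ≫ (α_ u g wm).inv

/-- [WB4]: existence of liftings of 2-cells along arrows of `W`, together with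
the compatibility of any two such liftings. -/
def WB4 (W : WClass B) : Prop :=
  (∀ ⦃a b c : B⦄ (f g : a ⟶ b) (wm : b ⟶ c), W wm → ∀ η : f ≫ wm ⟶ g ≫ wm,
    ∃ (a' : B) (u : a' ⟶ a), W u ∧ ∃ β : u ≫ f ⟶ u ≫ g, IsLift f g wm η u β) ∧
  (∀ ⦃a b c : B⦄ (f g : a ⟶ b) (wm : b ⟶ c), W wm → ∀ η : f ≫ wm ⟶ g ≫ wm,
    ∀ ⦃a₁ : B⦄ (u₁ : a₁ ⟶ a) (β₁ : u₁ ≫ f ⟶ u₁ ≫ g), W u₁ → IsLift f g wm η u₁ β₁ →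
      ∀ ⦃a₂ : B⦄ (u₂ : a₂ ⟶ a) (β₂ : u₂ ≫ f ⟶ u₂ ≫ g), W u₂ → IsLift f g wm η u₂ β₂ →
        ∃ (d : B) (s : d ⟶ a₁) (t : d ⟶ a₂), W (s ≫ u₁) ∧ W (t ≫ u₂) ∧
          ∃ ε₀ : s ≫ u₁ ≅ t ≫ u₂,
            ((α_ s u₁ f).hom ≫ s ◁ β₁ ≫ (α_ s u₁ g).inv) ≫ ε₀.hom ▷ g =
              ε₀.hom ▷ f ≫ (α_ t u₂ f).hom ≫ t ◁ β₂ ≫ (α_ t u₂ g).inv)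

/-- [WB5]: `W` is closed under invertible 2-cells. -/
def WB5 (W : WClass B) : Prop :=
  ∀ ⦃a b : B⦄ (vm wm : a ⟶ b), W wm → Nonempty (vm ≅ wm) → W vm

end WClass

/-- A 1-morphism `wm` is co-fully-faithful if every 2-cell `wm ≫ f ⟶ wm ≫ g`
factors uniquely through right whiskering by `wm`. -/
def CoFF {B : Type u} [Bicategory.{w, v} B] ⦃a b : B⦄ (wm : a ⟶ b) : Prop :=
  ∀ ⦃c : B⦄ (f g : b ⟶ c) (η : wm ≫ f ⟶ wm ≫ g), ∃! η' : f ⟶ g, wm ◁ η' = η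

/-- A 1-morphism `wm` is co-full if every 2-cell `wm ≫ f ⟶ wm ≫ g`
factors (not necessarily uniquely) through right whiskering by `wm`. -/
def CoFull {B : Type u} [Bicategory.{w, v} B] ⦃a b : B⦄ (wm : a ⟶ b) : Prop :=
  ∀ ⦃c : B⦄ (f g : b ⟶ c) (η : wm ≫ f ⟶ wm ≫ g), ∃ η' : f ⟶ g, wm ◁ η' = η

/-- Equivalence of 2-cell diagrams between the spans `(u₁, f₁)` and `(u₂, f₂)` in the
construction of the bicategory of fractions: the diagram `(v₁, v₂, αc, β)` is equivalent
to the diagram `(v₁', v₂', αc', β')` when there is a common refinement `s, t` with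
invertible comparison 2-cells `ε₁, ε₂`, the relevant composite in `W`, satisfying the
two pasting equations. -/
def DiagEquiv {B : Type u} [Bicategory.{w, v} B] (W : WClass B)
    {a b c₁ c₂ : B} (u₁ : c₁ ⟶ a) (f₁ : c₁ ⟶ b) (u₂ : c₂ ⟶ a) (f₂ : c₂ ⟶ b)
    {d : B} (v₁ : d ⟶ c₁) (v₂ : d ⟶ c₂)
    (αc : v₁ ≫ u₁ ≅ v₂ ≫ u₂) (β : v₁ ≫ f₁ ⟶ v₂ ≫ f₂)
    {d' : B} (v₁' : d' ⟶ c₁) (v₂' : d' ⟶ c₂)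
    (αc' : v₁' ≫ u₁ ≅ v₂' ≫ u₂) (β' : v₁' ≫ f₁ ⟶ v₂' ≫ f₂) : Prop :=
  ∃ (e : B) (s : e ⟶ d) (t : e ⟶ d'),
    W ((s ≫ v₁) ≫ u₁) ∧
    ∃ (ε₁ : s ≫ v₁ ≅ t ≫ v₁') (ε₂ : s ≫ v₂ ≅ t ≫ v₂'),
      (ε₁.hom ▷ u₁ ≫ (α_ t v₁' u₁).hom ≫ t ◁ αc'.hom ≫ (α_ t v₂' u₂).inv =
        (α_ s v₁ u₁).hom ≫ s ◁ αc.hom ≫ (α_ s v₂ u₂).inv ≫ ε₂.hom ▷ u₂) ∧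
      (ε₁.hom ▷ f₁ ≫ (α_ t v₁' f₁).hom ≫ t ◁ β' ≫ (α_ t v₂' f₂).inv =
        (α_ s v₁ f₁).hom ≫ s ◁ β ≫ (α_ s v₂ f₂).inv ≫ ε₂.hom ▷ f₂)


/-!
Compare the given diagram with the prescribed square `γ` over a common refinement. [WB3]
relates `v₁ ≫ u₁` and `t₁ ≫ u₁`, and lifting invertible 2-cells along `u₁` and then `u₂`
([WB4]) yields `s`, `t` and invertible `ε₁`, `ε₂` satisfying the pasting equation for the
left-hand 2-cells `αc` and `γ`. Here `t` is a composite of arrows of `W`, hence co-full, so the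
2-cell that `β` induces on `t ≫ t₁ ≫ f₁ ⟶ t ≫ t₂ ≫ f₂` descends to the required `δ`. Finally
a precomposition brings the refinement into `W`.
-/

section Whiskering

variable {B : Type u} [Bicategory.{w, v} B]

def whiskerLeftAssoc {a b c c' d : B} (x : a ⟶ b) {s : b ⟶ c} {t : b ⟶ c'}
    {h : c ⟶ d} {h' : c' ⟶ d} (β : s ≫ h ⟶ t ≫ h') : (x ≫ s) ≫ h ⟶ (x ≫ t) ≫ h' :=
  (α_ x s h).hom ≫ x ◁ β ≫ (α_ x t h').inv

def whiskerLeftAssocIso {a b c c' d : B} (x : a ⟶ b) {s : b ⟶ c} {t : b ⟶ c'}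
    {h : c ⟶ d} {h' : c' ⟶ d} (β : s ≫ h ≅ t ≫ h') : (x ≫ s) ≫ h ≅ (x ≫ t) ≫ h' :=
  α_ x s h ≪≫ whiskerLeftIso x β ≪≫ (α_ x t h').symm

@[simp]
lemma whiskerLeftAssocIso_hom {a b c c' d : B} (x : a ⟶ b) {s : b ⟶ c} {t : b ⟶ c'}
    {h : c ⟶ d} {h' : c' ⟶ d} (β : s ≫ h ≅ t ≫ h') :
    (whiskerLeftAssocIso x β).hom = whiskerLeftAssoc x β.hom :=
  rfl

@[simp]
lemma whiskerLeftAssoc_comp {a b c c' c'' d : B} (x : a ⟶ b) {s : b ⟶ c} {t : b ⟶ c'}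
    {r : b ⟶ c''} {h : c ⟶ d} {h' : c' ⟶ d} {h'' : c'' ⟶ d}
    (β : s ≫ h ⟶ t ≫ h') (γ : t ≫ h' ⟶ r ≫ h'') :
    whiskerLeftAssoc x (β ≫ γ) = whiskerLeftAssoc x β ≫ whiskerLeftAssoc x γ := by
  simp [whiskerLeftAssoc]

@[simp]
lemma whiskerLeftAssoc_id {a b c d : B} (x : a ⟶ b) (s : b ⟶ c) (h : c ⟶ d) :
    whiskerLeftAssoc x (𝟙 (s ≫ h)) = 𝟙 _ := by
  simp [whiskerLeftAssoc]

lemma whiskerLeftAssoc_eq_id {a b c d : B} (x : a ⟶ b) {s : b ⟶ c} {h : c ⟶ d}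
    {ψ : s ≫ h ⟶ s ≫ h} (hψ : x ◁ ψ = 𝟙 _) : whiskerLeftAssoc x ψ = 𝟙 _ := by
  simp [whiskerLeftAssoc, hψ]

end Whiskering

section CoFull

variable {B : Type u} [Bicategory.{w, v} B]

lemma CoFull.comp {x y z : B} {f : x ⟶ y} {g : y ⟶ z} (hf : CoFull f) (hg : CoFull g) :
    CoFull (f ≫ g) := by
  intro c p q η
  obtain ⟨η₁, hη₁⟩ := hf (g ≫ p) (g ≫ q) ((α_ f g p).inv ≫ η ≫ (α_ f g q).hom)
  obtain ⟨η₂, hη₂⟩ := hg p q η₁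
  refine ⟨η₂, ?_⟩
  rw [comp_whiskerLeft, hη₂, hη₁]
  simp

end CoFull

section Diagrams

variable {B : Type u} [Bicategory.{w, v} B]

def PastingEq {a c₁ c₂ d e z : B} {h₁ : c₁ ⟶ a} {h₂ : c₂ ⟶ a} {v₁ : d ⟶ c₁} {v₂ : d ⟶ c₂}
    {v₁' : e ⟶ c₁} {v₂' : e ⟶ c₂} {s : z ⟶ d} {t : z ⟶ e}
    (ε₁ : s ≫ v₁ ≅ t ≫ v₁') (ε₂ : s ≫ v₂ ≅ t ≫ v₂')
    (x : v₁ ≫ h₁ ⟶ v₂ ≫ h₂) (y : v₁' ≫ h₁ ⟶ v₂' ≫ h₂) : Prop :=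
  ε₁.hom ▷ h₁ ≫ whiskerLeftAssoc t y = whiskerLeftAssoc s x ≫ ε₂.hom ▷ h₂

variable {a c₁ c₂ d e z : B} {h₁ : c₁ ⟶ a} {h₂ : c₂ ⟶ a} {v₁ : d ⟶ c₁} {v₂ : d ⟶ c₂}
    {v₁' : e ⟶ c₁} {v₂' : e ⟶ c₂} {s : z ⟶ d} {t : z ⟶ e}
    {ε₁ : s ≫ v₁ ≅ t ≫ v₁'} {ε₂ : s ≫ v₂ ≅ t ≫ v₂'}

lemma PastingEq.whiskerLeft {x : v₁ ≫ h₁ ⟶ v₂ ≫ h₂} {y : v₁' ≫ h₁ ⟶ v₂' ≫ h₂}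
    (hε : PastingEq ε₁ ε₂ x y) {z' : B} (U : z' ⟶ z) :
    PastingEq (whiskerLeftAssocIso U ε₁) (whiskerLeftAssocIso U ε₂) x y := by
  unfold PastingEq at hε ⊢
  calc _ = (α_ U s v₁).hom ▷ h₁ ≫ (α_ U (s ≫ v₁) h₁).hom ≫
          U ◁ (ε₁.hom ▷ h₁ ≫ whiskerLeftAssoc t y) ≫
          (α_ U (t ≫ v₂') h₂).inv ≫ (α_ U t v₂').inv ▷ h₂ := by
        simp only [whiskerLeftAssocIso_hom, whiskerLeftAssoc]; bicategory
    _ = _ := by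
        rw [hε]; simp only [whiskerLeftAssocIso_hom, whiskerLeftAssoc]; bicategory

lemma exists_pastingEq_of_coFull (ht : CoFull t) (ε₁ : s ≫ v₁ ≅ t ≫ v₁')
    (ε₂ : s ≫ v₂ ≅ t ≫ v₂') (x : v₁ ≫ h₁ ⟶ v₂ ≫ h₂) :
    ∃ y : v₁' ≫ h₁ ⟶ v₂' ≫ h₂, PastingEq ε₁ ε₂ x y := by
  obtain ⟨y, hy⟩ := ht _ _ ((α_ t v₁' h₁).inv ≫ ε₁.inv ▷ h₁ ≫ whiskerLeftAssoc s x ≫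
    ε₂.hom ▷ h₂ ≫ (α_ t v₂' h₂).hom)
  refine ⟨y, ?_⟩
  simp [PastingEq, whiskerLeftAssoc, hy]

end Diagrams

namespace WClass

variable {B : Type u} [Bicategory.{w, v} B] {W : WClass B}

/-- Composites of arrows of `W` need not lie in `W`; by [WB2] they do after a precomposition,
and that is all the final refinement needs. -/
def PrecompMem (W : WClass B) {x y : B} (k : x ⟶ y) : Prop :=
  ∃ (c : B) (h : c ⟶ x), W (h ≫ k)

lemma precompMem_of_mem (h5 : W.WB5) {x y : B} {k : x ⟶ y} (hk : W k) : W.PrecompMem k :=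
  ⟨x, 𝟙 x, h5 _ _ hk ⟨λ_ k⟩⟩

lemma PrecompMem.of_iso (h5 : W.WB5) {x y : B} {k k' : x ⟶ y} (e : k' ≅ k)
    (hk : W.PrecompMem k) : W.PrecompMem k' := by
  obtain ⟨c, h, hh⟩ := hk
  exact ⟨c, h, h5 _ _ hh ⟨whiskerLeftIso h e⟩⟩

lemma PrecompMem.comp (h2 : W.WB2) (h3 : W.WB3) (h5 : W.WB5) {x y z : B} {wm : x ⟶ y}
    {k : y ⟶ z} (hw : W wm) (hk : W.PrecompMem k) : W.PrecompMem (wm ≫ k) := by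
  obtain ⟨c, h, hh⟩ := hk
  obtain ⟨d, h', vm, hvm, ⟨κ⟩⟩ := h3 wm h hw
  obtain ⟨p, u', hu'⟩ := h2 vm (h ≫ k) hvm hh
  refine ⟨p, u' ≫ h', h5 _ _ hu' ⟨?_⟩⟩
  exact α_ u' h' (wm ≫ k) ≪≫ whiskerLeftIso u'
    ((α_ h' wm k).symm ≪≫ whiskerRightIso κ k ≪≫ α_ vm h k)

lemma isLift_iff {a b c a' : B} {f g : a ⟶ b} {wm : b ⟶ c} {η : f ≫ wm ⟶ g ≫ wm}
    {u : a' ⟶ a} {β : u ≫ f ⟶ u ≫ g} : IsLift f g wm η u β ↔ β ▷ wm = whiskerLeftAssoc u η :=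
  Iff.rfl

lemma IsLift.whiskerLeft {a b c a' a'' : B} {f g : a ⟶ b} {wm : b ⟶ c}
    {η : f ≫ wm ⟶ g ≫ wm} {u : a' ⟶ a} {β : u ≫ f ⟶ u ≫ g}
    (h : IsLift f g wm η u β) (x : a'' ⟶ a') :
    IsLift f g wm η (x ≫ u) (whiskerLeftAssoc x β) := by
  rw [isLift_iff] at h ⊢
  simp only [whiskerLeftAssoc, comp_whiskerRight, whisker_assoc, h]
  bicategory

lemma IsLift.comp {a b c a' : B} {f g k : a ⟶ b} {wm : b ⟶ c}
    {η : f ≫ wm ⟶ g ≫ wm} {η' : g ≫ wm ⟶ k ≫ wm} {u : a' ⟶ a}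
    {β : u ≫ f ⟶ u ≫ g} {β' : u ≫ g ⟶ u ≫ k}
    (h : IsLift f g wm η u β) (h' : IsLift g k wm η' u β') :
    IsLift f k wm (η ≫ η') u (β ≫ β') := by
  rw [isLift_iff] at h h' ⊢
  rw [comp_whiskerRight, h, h', whiskerLeftAssoc_comp]

lemma IsLift.of_iso {a b c a' : B} {f g : a ⟶ b} {wm : b ⟶ c}
    {η : f ≫ wm ⟶ g ≫ wm} {u u' : a' ⟶ a} {β : u ≫ f ⟶ u ≫ g} (e : u' ≅ u)
    (h : IsLift f g wm η u β) : IsLift f g wm η u' (e.hom ▷ f ≫ β ≫ e.inv ▷ g) := by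
  rw [isLift_iff] at h ⊢
  simp only [comp_whiskerRight, h, whiskerLeftAssoc]
  calc (e.hom ▷ f) ▷ wm ≫ ((α_ u f wm).hom ≫ u ◁ η ≫ (α_ u g wm).inv) ≫ (e.inv ▷ g) ▷ wm
      = (α_ u' f wm).hom ≫ ((e.hom ▷ (f ≫ wm) ≫ u ◁ η) ≫ e.inv ▷ (g ≫ wm)) ≫
        (α_ u' g wm).inv := by bicategory
    _ = (α_ u' f wm).hom ≫ u' ◁ η ≫ (α_ u' g wm).inv := by
        rw [← whisker_exchange]; simp

lemma exists_mem_whiskerLeft_eq_id (h1 : W.WB1) (h4 : W.WB4) {a b c : B} {k : a ⟶ b}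
    {wm : b ⟶ c} (hw : W wm) {ψ : k ⟶ k} (hψ : ψ ▷ wm = 𝟙 _) :
    ∃ (a' : B) (x : a' ⟶ a), W x ∧ x ◁ ψ = 𝟙 _ := by
  have lift_id : IsLift k k wm (𝟙 _) (𝟙 a) (𝟙 _) := by simp [isLift_iff]
  have lift_ψ : IsLift k k wm (𝟙 _) (𝟙 a) (𝟙 a ◁ ψ) := by
    rw [isLift_iff, whisker_assoc, hψ]; simp
  -- `𝟙` and `𝟙 ◁ ψ` lift the same 2-cell, so the uniqueness part of [WB4] equalizes them.
  obtain ⟨d, _, t, -, ht, ε₀, hε₀⟩ :=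
    h4.2 k k wm hw (𝟙 _) (𝟙 a) (𝟙 _) (h1 a) lift_id (𝟙 a) (𝟙 a ◁ ψ) (h1 a) lift_ψ
  refine ⟨d, t ≫ 𝟙 a, ht, ?_⟩
  rw [← cancel_epi (ε₀.hom ▷ k)]
  simpa [comp_whiskerLeft] using hε₀.symm

lemma exists_comp_mem_whiskerLeftAssoc_comp_eq_id (h1 : W.WB1) (h2 : W.WB2) (h4 : W.WB4)
    (h5 : W.WB5) {a b c a' : B} {f g : a ⟶ b} {wm : b ⟶ c} (hw : W wm) {P : a' ⟶ a} (hP : W P)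
    {η : f ≫ wm ⟶ g ≫ wm} {η' : g ≫ wm ⟶ f ≫ wm} (hη : η ≫ η' = 𝟙 _)
    {β : P ≫ f ⟶ P ≫ g} {β' : P ≫ g ⟶ P ≫ f}
    (hβ : IsLift f g wm η P β) (hβ' : IsLift g f wm η' P β') :
    ∃ (a'' : B) (x : a'' ⟶ a'), W (x ≫ P) ∧
      whiskerLeftAssoc x β ≫ whiskerLeftAssoc x β' = 𝟙 _ := by
  have hlift := hβ.comp hβ'
  rw [hη, isLift_iff, whiskerLeftAssoc_id] at hlift
  obtain ⟨_, x, hx, hxβ⟩ := exists_mem_whiskerLeft_eq_id h1 h4 hw hlift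
  obtain ⟨a'', u, hu⟩ := h2 x P hx hP
  refine ⟨a'', u ≫ x, h5 _ _ hu ⟨α_ u x P⟩, ?_⟩
  rw [← whiskerLeftAssoc_comp]
  apply whiskerLeftAssoc_eq_id
  rw [comp_whiskerLeft, hxβ]
  simp

lemma exists_isLift_iso (h1 : W.WB1) (h2 : W.WB2) (h3 : W.WB3) (h4 : W.WB4) (h5 : W.WB5)
    {a b c : B} {f g : a ⟶ b} {wm : b ⟶ c} (hw : W wm) (θ : f ≫ wm ≅ g ≫ wm) :
    ∃ (a' : B) (r : a' ⟶ a), W r ∧ ∃ μ : r ≫ f ≅ r ≫ g, IsLift f g wm θ.hom r μ.hom := by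
  obtain ⟨_, r₁, hr₁, β₁, hβ₁⟩ := h4.1 f g wm hw θ.hom
  obtain ⟨_, r₂, hr₂, β₂, hβ₂⟩ := h4.1 g f wm hw θ.inv
  obtain ⟨_, h, vm, hvm, ⟨κ⟩⟩ := h3 r₂ r₁ hr₂
  obtain ⟨_, u, hu⟩ := h2 vm r₁ hvm hr₁
  -- Lifts of `θ.hom` and `θ.inv` along a common arrow compose to lifts of identities; one
  -- refinement for each composite makes them mutually inverse.
  have hB := (hβ₁.whiskerLeft vm).whiskerLeft u
  have hC := ((hβ₂.whiskerLeft h).of_iso κ.symm).whiskerLeft u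
  obtain ⟨_, x₁, hx₁, hBC⟩ :=
    exists_comp_mem_whiskerLeftAssoc_comp_eq_id h1 h2 h4 h5 hw hu θ.hom_inv_id hB hC
  obtain ⟨a', x₂, hx₂, hCB⟩ := exists_comp_mem_whiskerLeftAssoc_comp_eq_id h1 h2 h4 h5 hw hx₁
    θ.inv_hom_id (hC.whiskerLeft x₁) (hB.whiskerLeft x₁)
  refine ⟨a', _, hx₂, ⟨_, _, ?_, hCB⟩, (hB.whiskerLeft x₁).whiskerLeft x₂⟩
  rw [← whiskerLeftAssoc_comp, hBC, whiskerLeftAssoc_id]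

lemma diagEquiv_of_precompMem (h5 : W.WB5) {a b c₁ c₂ d d' z : B} {u₁ : c₁ ⟶ a}
    {f₁ : c₁ ⟶ b} {u₂ : c₂ ⟶ a} {f₂ : c₂ ⟶ b} {v₁ : d ⟶ c₁} {v₂ : d ⟶ c₂}
    {αc : v₁ ≫ u₁ ≅ v₂ ≫ u₂} {β : v₁ ≫ f₁ ⟶ v₂ ≫ f₂} {v₁' : d' ⟶ c₁} {v₂' : d' ⟶ c₂}
    {αc' : v₁' ≫ u₁ ≅ v₂' ≫ u₂} {β' : v₁' ≫ f₁ ⟶ v₂' ≫ f₂} {s : z ⟶ d} {t : z ⟶ d'}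
    {ε₁ : s ≫ v₁ ≅ t ≫ v₁'} {ε₂ : s ≫ v₂ ≅ t ≫ v₂'} (hW : W.PrecompMem ((s ≫ v₁) ≫ u₁))
    (hα : PastingEq ε₁ ε₂ αc.hom αc'.hom) (hβ : PastingEq ε₁ ε₂ β β') :
    DiagEquiv W u₁ f₁ u₂ f₂ v₁ v₂ αc β v₁' v₂' αc' β' := by
  obtain ⟨e, U, hU⟩ := hW
  refine ⟨e, U ≫ s, U ≫ t, h5 _ _ hU ⟨whiskerRightIso (α_ U s v₁) u₁ ≪≫ α_ U (s ≫ v₁) u₁⟩,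
    whiskerLeftAssocIso U ε₁, whiskerLeftAssocIso U ε₂, ?_, ?_⟩
  · simpa [PastingEq, whiskerLeftAssoc] using hα.whiskerLeft U
  · simpa [PastingEq, whiskerLeftAssoc] using hβ.whiskerLeft U

lemma exists_pastingEq_of_iso (h1 : W.WB1) (h2 : W.WB2) (h3 : W.WB3) (h4 : W.WB4)
    (h5 : W.WB5) {a c₁ c₂ d e z : B} {u₁ : c₁ ⟶ a} {u₂ : c₂ ⟶ a} (hu₂ : W u₂)
    {v₁ : d ⟶ c₁} {v₂ : d ⟶ c₂} {t₁ : e ⟶ c₁} {t₂ : e ⟶ c₂}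
    (αc : v₁ ≫ u₁ ≅ v₂ ≫ u₂) (γ : t₁ ≫ u₁ ≅ t₂ ≫ u₂) {s : z ⟶ d} {t : z ⟶ e}
    (μ : s ≫ v₁ ≅ t ≫ t₁) :
    ∃ (z' : B) (r : z' ⟶ z), W r ∧ ∃ ε₂ : (r ≫ s) ≫ v₂ ≅ (r ≫ t) ≫ t₂,
      PastingEq (whiskerLeftAssocIso r μ) ε₂ αc.hom γ.hom := by
  obtain ⟨z', r, hr, μ₂, hμ₂⟩ := exists_isLift_iso h1 h2 h3 h4 h5 hu₂
    (whiskerLeftAssocIso s αc.symm ≪≫ whiskerRightIso μ u₁ ≪≫ whiskerLeftAssocIso t γ)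
  refine ⟨z', r, hr, α_ r s v₂ ≪≫ μ₂ ≪≫ (α_ r t t₂).symm, ?_⟩
  have hε₂ : (α_ r s v₂ ≪≫ μ₂ ≪≫ (α_ r t t₂).symm).hom ▷ u₂ = whiskerLeftAssoc (r ≫ s) αc.inv ≫
      (whiskerLeftAssoc r μ.hom) ▷ u₁ ≫ whiskerLeftAssoc (r ≫ t) γ.hom := by
    rw [isLift_iff] at hμ₂
    simp only [Iso.trans_hom, Iso.symm_hom, comp_whiskerRight, hμ₂, whiskerLeftAssocIso_hom,
      whiskerRightIso_hom, whiskerLeftAssoc]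
    bicategory
  rw [PastingEq, hε₂, ← Category.assoc, ← whiskerLeftAssoc_comp, Iso.hom_inv_id,
    whiskerLeftAssoc_id, Category.id_comp, whiskerLeftAssocIso_hom]

lemma exists_pastingEq_coFull_precompMem (h1 : W.WB1) (h2 : W.WB2) (h3 : W.WB3) (h4 : W.WB4)
    (h5 : W.WB5) (hcofull : ∀ ⦃a b : B⦄ (f : a ⟶ b), W f → CoFull f)
    {a c₁ c₂ d e : B} {u₁ : c₁ ⟶ a} {u₂ : c₂ ⟶ a} (hu₁ : W u₁) (hu₂ : W u₂)
    {v₁ : d ⟶ c₁} {v₂ : d ⟶ c₂} (hv : W (v₁ ≫ u₁)) {t₁ : e ⟶ c₁} {t₂ : e ⟶ c₂}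
    (ht : W (t₁ ≫ u₁)) (αc : v₁ ≫ u₁ ≅ v₂ ≫ u₂) (γ : t₁ ≫ u₁ ≅ t₂ ≫ u₂) :
    ∃ (z : B) (s : z ⟶ d) (t : z ⟶ e) (ε₁ : s ≫ v₁ ≅ t ≫ t₁) (ε₂ : s ≫ v₂ ≅ t ≫ t₂),
      CoFull t ∧ W.PrecompMem ((s ≫ v₁) ≫ u₁) ∧ PastingEq ε₁ ε₂ αc.hom γ.hom := by
  obtain ⟨_, p, q, hq, ⟨ζ⟩⟩ := h3 (v₁ ≫ u₁) (t₁ ≫ u₁) hv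
  obtain ⟨_, r, hr, μ, -⟩ := exists_isLift_iso h1 h2 h3 h4 h5 hu₁
    (α_ p v₁ u₁ ≪≫ ζ ≪≫ (α_ q t₁ u₁).symm)
  let μ' : (r ≫ p) ≫ v₁ ≅ (r ≫ q) ≫ t₁ := α_ r p v₁ ≪≫ μ ≪≫ (α_ r q t₁).symm
  obtain ⟨z, r', hr', ε₂, hε⟩ := exists_pastingEq_of_iso h1 h2 h3 h4 h5 hu₂ αc γ μ'
  refine ⟨z, _, _, whiskerLeftAssocIso r' μ', ε₂,
    (hcofull r' hr').comp ((hcofull r hr).comp (hcofull q hq)), ?_, hε⟩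
  refine PrecompMem.of_iso h5 ?_
    (PrecompMem.comp h2 h3 h5 hr' (PrecompMem.comp h2 h3 h5 hr
      (PrecompMem.comp h2 h3 h5 hq (precompMem_of_mem h5 ht))))
  exact whiskerRightIso (whiskerLeftAssocIso r' μ') u₁ ≪≫ α_ _ t₁ u₁ ≪≫
    α_ r' (r ≫ q) (t₁ ≫ u₁) ≪≫ whiskerLeftIso r' (α_ r q (t₁ ≫ u₁))

end WClass

theorem statement15 {B : Type u} [Bicategory.{w, v} B] (W : WClass B)
    (h1 : W.WB1) (h2 : W.WB2) (h3 : W.WB3) (h4 : W.WB4) (h5 : W.WB5)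
    (hcofull : ∀ ⦃a b : B⦄ (f : a ⟶ b), W f → CoFull f)
    {a b c₁ c₂ d e : B} (u₁ : c₁ ⟶ a) (f₁ : c₁ ⟶ b) (u₂ : c₂ ⟶ a) (f₂ : c₂ ⟶ b)
    (hu₁ : W u₁) (hu₂ : W u₂)
    (v₁ : d ⟶ c₁) (v₂ : d ⟶ c₂) (hv : W (v₁ ≫ u₁))
    (αc : v₁ ≫ u₁ ≅ v₂ ≫ u₂) (β : v₁ ≫ f₁ ⟶ v₂ ≫ f₂)
    (t₁ : e ⟶ c₁) (t₂ : e ⟶ c₂) (ht : W (t₁ ≫ u₁))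
    (γ : t₁ ≫ u₁ ≅ t₂ ≫ u₂) :
    ∃ δ : t₁ ≫ f₁ ⟶ t₂ ≫ f₂,
      DiagEquiv W u₁ f₁ u₂ f₂ v₁ v₂ αc β t₁ t₂ γ δ := by
  obtain ⟨_, s, t, ε₁, ε₂, hcofull_t, hW, hα⟩ :=
    WClass.exists_pastingEq_coFull_precompMem h1 h2 h3 h4 h5 hcofull hu₁ hu₂ hv ht αc γ
  obtain ⟨δ, hβ⟩ := exists_pastingEq_of_coFull hcofull_t ε₁ ε₂ β
  exact ⟨δ, WClass.diagEquiv_of_precompMem h5 hW hα hβ⟩
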